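/- There exists an assignment of a cyclic orientation to each 7-cycle of the Coxeter graph Γ (i.e., for each 7-cycle, a choice of one of the two directed closed walks traversing it) such that for every 2-path u–v–w of Γ, of the two 7-cycles of Γ containing this 2-path, exactly one traverses the ordered triple (u,v,w) and the other traverses (w,v,u). Equivalently, there is a family of 24 directed 7-cycles of Γ, orienting the 24 (undirected) 7-cycles of Γ, such that every directed path of length 2 in Γ occurs in exactly one member of the family. -/

import Mathlib

/-- Vertex set of the Coxeter graph: four concentric 7-tuples `u, v, t, z`. -/
abbrev CoxeterVertex := Fin 4 × ZMod 7

/-- Base (asymmetric) adjacency relation for the Coxeter graph: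
`u_x ~ u_{x+1}`, `v_x ~ v_{x+2}`, `t_x ~ t_{x+3}`, and `z_x ~ u_x, v_x, t_x`. -/
def coxeterRel : CoxeterVertex → CoxeterVertex → Prop := fun p q =>
  (p.1 = 0 ∧ q.1 = 0 ∧ q.2 = p.2 + 1) ∨
  (p.1 = 1 ∧ q.1 = 1 ∧ q.2 = p.2 + 2) ∨
  (p.1 = 2 ∧ q.1 = 2 ∧ q.2 = p.2 + 3) ∨
  (p.1 = 3 ∧ (q.1 = 0 ∨ q.1 = 1 ∨ q.1 = 2) ∧ q.2 = p.2)

/-- The Coxeter graph on 28 vertices. -/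
def coxeterGraph : SimpleGraph CoxeterVertex := SimpleGraph.fromRel coxeterRel

/-- A 7-cycle of a graph `G` is a subgraph of `G` isomorphic to the cycle graph
on 7 vertices. -/
def IsSevenCycle {V : Type*} {G : SimpleGraph V} (H : G.Subgraph) : Prop :=
  Nonempty (H.coe ≃g SimpleGraph.cycleGraph 7)

/-- A directed 7-cycle of a graph `G`, given as an injective `ZMod 7`-indexed
closed directed walk along edges of `G`. -/
def IsDirectedSevenCycle {V : Type*} (G : SimpleGraph V) (f : ZMod 7 → V) : Prop :=
  Function.Injective f ∧ ∀ i : ZMod 7, G.Adj (f i) (f (i + 1))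

/-- The directed walk `f` traverses the subgraph `C`: it visits exactly the
vertices of `C` and travels along edges of `C`. -/
def Traverses {V : Type*} {G : SimpleGraph V} (f : ZMod 7 → V) (C : G.Subgraph) : Prop :=
  Set.range f = C.verts ∧ ∀ i : ZMod 7, C.Adj (f i) (f (i + 1))

/-! The orientation is given by an explicit family of 24 directed 7-cycles, and every claim about
it is a finite check decided by the kernel: every closed walk of length 7 along the neighbour lists
is a rotation or a reflection of a member of the family, and every 2-path `u – v – w` occurs, in
this direction, in exactly one member. A 7-cycle subgraph yields such a closed walk through its
isomorphism with `cycleGraph 7`. -/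

section SevenCycles

variable {V : Type*} {G : SimpleGraph V}

-- `ZMod 7` is `Fin 7` by definition, so vertices of `cycleGraph 7` serve as indices in `ZMod 7`.
theorem IsSevenCycle.exists_traverses {C : G.Subgraph} (hC : IsSevenCycle C) :
    ∃ g : ZMod 7 → V, Traverses g C := by
  obtain ⟨e⟩ := hC
  refine ⟨fun i => (e.symm i).1, ?_, fun i => e.symm.map_adj_iff.mpr ?_⟩
  · ext x
    exact ⟨by rintro ⟨i, rfl⟩; exact (e.symm i).2, fun hx => ⟨e ⟨x, hx⟩, by simp⟩⟩
  · exact Or.inr (add_sub_cancel_left i 1)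

theorem Traverses.of_eq_add {f g : ZMod 7 → V} {C : G.Subgraph} (hg : Traverses g C) (c : ZMod 7)
    (h : ∀ j, g j = f (j + c)) : Traverses f C := by
  have hf : f = fun i => g (i - c) := funext fun i => by simp [h]
  subst hf
  refine ⟨?_, fun i => by simpa [sub_add_eq_add_sub] using hg.2 (i - c)⟩
  rw [← hg.1]
  exact (Equiv.subRight c).surjective.range_comp g

theorem Traverses.of_eq_sub {f g : ZMod 7 → V} {C : G.Subgraph} (hg : Traverses g C) (c : ZMod 7)
    (h : ∀ j, g j = f (c - j)) : Traverses f C := by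
  have hf : f = fun i => g (c - i) := funext fun i => by simp [h]
  subst hf
  refine ⟨?_, fun i => by simpa [sub_add_eq_sub_sub] using (hg.2 (c - i - 1)).symm⟩
  rw [← hg.1]
  exact (Equiv.subLeft c).surjective.range_comp g

end SevenCycles

theorem vecCons_zmodSeven_apply {V : Type*} (g : ZMod 7 → V) (j : ZMod 7) :
    (show ZMod 7 → V from ![g 0, g 1, g 2, g 3, g 4, g 5, g 6]) j = g j := by
  fin_cases j <;> rfl

instance : DecidableRel coxeterRel := fun p q => by unfold coxeterRel; infer_instance

instance : DecidableRel coxeterGraph.Adj := fun p q =>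
  inferInstanceAs (Decidable (p ≠ q ∧ (coxeterRel p q ∨ coxeterRel q p)))

namespace Coxeter

def neighbors : CoxeterVertex → List CoxeterVertex
  | (0, x) => [(0, x + 1), (0, x - 1), (3, x)]
  | (1, x) => [(1, x + 2), (1, x - 2), (3, x)]
  | (2, x) => [(2, x + 3), (2, x - 3), (3, x)]
  | (3, x) => [(0, x), (1, x), (2, x)]

theorem mem_neighbors_of_adj :
    ∀ {p q : CoxeterVertex}, coxeterGraph.Adj p q → q ∈ neighbors p := by
  decide +kernel

def rotate (k : ZMod 7) (p : CoxeterVertex) : CoxeterVertex := (p.1, p.2 + k)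

def ringU : ZMod 7 → CoxeterVertex := fun x => (0, x)

def ringV : ZMod 7 → CoxeterVertex := fun x => (1, 2 * x)

def ringT : ZMod 7 → CoxeterVertex := fun x => (2, 4 * x)

def cycleUV : ZMod 7 → CoxeterVertex := ![(0, 0), (3, 0), (1, 0), (1, 2), (3, 2), (0, 2), (0, 1)]

def cycleVT : ZMod 7 → CoxeterVertex := ![(1, 0), (3, 0), (2, 0), (2, 4), (3, 4), (1, 4), (1, 2)]

def cycleTU : ZMod 7 → CoxeterVertex := ![(2, 0), (3, 0), (0, 0), (0, 1), (3, 1), (2, 1), (2, 4)]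

/- The family is invariant under `rotate` and under the automorphism
`(u_x, v_x, t_x, z_x) ↦ (v_{2x}, t_{2x}, u_{2x}, z_{2x})`, which cycles `ringU → ringV → ringT`
and `cycleUV → cycleVT → cycleTU`. -/
def orientedCycles : List (ZMod 7 → CoxeterVertex) :=
  [ringU, ringV, ringT] ++
    [0, 1, 2, 3, 4, 5, 6].flatMap fun k => [cycleUV, cycleVT, cycleTU].map (rotate k ∘ ·)

-- Otherwise `∀ f ∈ orientedCycles, _` is decided by enumerating all of `ZMod 7 → CoxeterVertex`.
attribute [local instance 2000] List.decidableBAll List.decidableBEx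

theorem orientedCycles_nodup : orientedCycles.Nodup := by decide +kernel

theorem isDirectedSevenCycle_of_mem_orientedCycles :
    ∀ f ∈ orientedCycles, IsDirectedSevenCycle coxeterGraph f := by
  suffices ∀ f ∈ orientedCycles, (∀ i j : ZMod 7, f i = f j → i = j) ∧
      ∀ i : ZMod 7, coxeterGraph.Adj (f i) (f (i + 1)) from
    fun f hf => ⟨fun i j => (this f hf).1 i j, (this f hf).2⟩
  decide +kernel

theorem existsUnique_mem_orientedCycles_twoPath :
    ∀ v : CoxeterVertex, ∀ u ∈ neighbors v, ∀ w ∈ neighbors v, u ≠ w →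
      ∃ f ∈ orientedCycles,
        (∃ i : ZMod 7, f i = u ∧ f (i + 1) = v ∧ f (i + 2) = w) ∧
        ∀ g ∈ orientedCycles,
          (∃ i : ZMod 7, g i = u ∧ g (i + 1) = v ∧ g (i + 2) = w) → g = f := by
  decide +kernel

theorem exists_mem_orientedCycles_of_closedWalk_vecCons :
    ∀ a₀ : CoxeterVertex, ∀ a₁ ∈ neighbors a₀, ∀ a₂ ∈ neighbors a₁, ∀ a₃ ∈ neighbors a₂,
      ∀ a₄ ∈ neighbors a₃, ∀ a₅ ∈ neighbors a₄, ∀ a₆ ∈ neighbors a₅, a₀ ∈ neighbors a₆ →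
      ∃ f ∈ orientedCycles, ∃ c : ZMod 7,
        (∀ j, (show ZMod 7 → CoxeterVertex from ![a₀, a₁, a₂, a₃, a₄, a₅, a₆]) j = f (j + c)) ∨
        (∀ j, (show ZMod 7 → CoxeterVertex from ![a₀, a₁, a₂, a₃, a₄, a₅, a₆]) j = f (c - j)) := by
  decide +kernel

theorem exists_mem_orientedCycles_of_closedWalk (g : ZMod 7 → CoxeterVertex)
    (hg : ∀ i, coxeterGraph.Adj (g i) (g (i + 1))) :
    ∃ f ∈ orientedCycles, ∃ c : ZMod 7, (∀ j, g j = f (j + c)) ∨ (∀ j, g j = f (c - j)) := by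
  simpa only [vecCons_zmodSeven_apply] using exists_mem_orientedCycles_of_closedWalk_vecCons (g 0)
    (g 1) (mem_neighbors_of_adj (hg 0)) (g 2) (mem_neighbors_of_adj (hg 1))
    (g 3) (mem_neighbors_of_adj (hg 2)) (g 4) (mem_neighbors_of_adj (hg 3))
    (g 5) (mem_neighbors_of_adj (hg 4)) (g 6) (mem_neighbors_of_adj (hg 5))
    (mem_neighbors_of_adj (hg 6))

end Coxeter

/-- There is a family of 24 directed 7-cycles of the Coxeter graph, orienting
its 24 undirected 7-cycles, such that every directed 2-path of the graph occurs
in exactly one member of the family; hence of the two 7-cycles containing any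
undirected 2-path `u – v – w`, exactly one traverses `(u,v,w)` and the other
traverses `(w,v,u)`. -/
theorem coxeterGraph_coherent_orientation_of_sevenCycles :
    ∃ D : Set (ZMod 7 → CoxeterVertex),
      D.ncard = 24 ∧
      (∀ f ∈ D, IsDirectedSevenCycle coxeterGraph f) ∧
      (∀ C : coxeterGraph.Subgraph, IsSevenCycle C → ∃ f ∈ D, Traverses f C) ∧
      (∀ u v w : CoxeterVertex,
        coxeterGraph.Adj u v → coxeterGraph.Adj v w → u ≠ w →
        ∃! f, f ∈ D ∧ ∃ i : ZMod 7, f i = u ∧ f (i + 1) = v ∧ f (i + 2) = w) := by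
  refine ⟨Coxeter.orientedCycles.toFinset, ?_, ?_, ?_, ?_⟩
  · rw [Set.ncard_coe_finset, List.toFinset_card_of_nodup Coxeter.orientedCycles_nodup]
    rfl
  · intro f hf
    exact Coxeter.isDirectedSevenCycle_of_mem_orientedCycles f (List.mem_toFinset.mp hf)
  · intro C hC
    obtain ⟨g, hg⟩ := hC.exists_traverses
    obtain ⟨f, hf, c, h | h⟩ :=
      Coxeter.exists_mem_orientedCycles_of_closedWalk g fun i => C.adj_sub (hg.2 i)
    · exact ⟨f, List.mem_toFinset.mpr hf, hg.of_eq_add c h⟩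
    · exact ⟨f, List.mem_toFinset.mpr hf, hg.of_eq_sub c h⟩
  · intro u v w huv hvw huw
    obtain ⟨f, hf, hpath, hunique⟩ := Coxeter.existsUnique_mem_orientedCycles_twoPath v u
      (Coxeter.mem_neighbors_of_adj huv.symm) w (Coxeter.mem_neighbors_of_adj hvw) huw
    refine ⟨f, ⟨List.mem_toFinset.mpr hf, hpath⟩, fun g ⟨hg, hgpath⟩ => ?_⟩
    exact hunique g (List.mem_toFinset.mp hg) hgpath
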